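/- Let 0 < λ < 1/2 and let p follow the Continuous Bernoulli(λ) distribution with density f(x) = C(λ)·λ^x·(1−λ)^(1−x) on [0,1], where C(λ) = (2·artanh(1−2λ))/(1−2λ). Let pass_{ContinuousBernoulli(λ)}@k := 1 − ∫₀¹ (1−p)^k f(p) dp. Then −log(pass_{ContinuousBernoulli(λ)}@k) = C(λ)·(1−λ)·k^(−1) + o(k^(−1)) as k → ∞; in particular the negative log aggregate success rate follows a power law in k with exponent 1. -/

import Mathlib

/-! With `b = log((1-λ)/λ) ≥ 0` the density is `C(λ)(1-λ)e^{-bp}`, so the failure integral is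
`C(λ)(1-λ)·E_k` with `E_k = ∫₀¹ (1-p)^k e^{-bp} dp`. Squeezing `e^{-bp}` between `(1-p)^m`, for an
integer `m ≥ b`, and `1` gives `k/(k+m+1) ≤ k·E_k ≤ 1`, hence `k·E_k → 1`. Finally
`x ≤ -log(1-x) ≤ x/(1-x)` shows that `k·x_k → c` forces `k·(-log(1-x_k)) → c`. -/


open MeasureTheory Real Filter

/-- The inverse hyperbolic tangent, `artanh x = (1/2)·log((1+x)/(1-x))`. -/
noncomputable def artanh (x : ℝ) : ℝ := Real.log ((1 + x) / (1 - x)) / 2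

open Topology

theorem integral_one_sub_pow (n : ℕ) : ∫ p in (0:ℝ)..1, (1 - p) ^ n = 1 / (n + 1) := by
  simp [intervalIntegral.integral_comp_sub_left (fun x : ℝ => x ^ n) 1]

theorem rpow_mul_rpow_one_sub {a c : ℝ} (ha : 0 < a) (hc : 0 < c) (p : ℝ) :
    a ^ p * c ^ (1 - p) = c * exp (-log (c / a) * p) := by
  rw [rpow_def_of_pos ha, rpow_def_of_pos hc, ← exp_add, log_div hc.ne' ha.ne',
    show log a * p + log c * (1 - p) = log c + -(log c - log a) * p by ring, exp_add, exp_log hc]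

theorem one_sub_pow_le_exp_neg_mul {p b : ℝ} {m : ℕ} (hp0 : 0 ≤ p) (hp1 : p ≤ 1)
    (hbm : b ≤ m) : (1 - p) ^ m ≤ exp (-b * p) :=
  calc (1 - p) ^ m ≤ exp (-p) ^ m :=
        pow_le_pow_left₀ (by linarith) (by linarith [add_one_le_exp (-p)]) m
    _ = exp (-m * p) := by rw [← exp_nat_mul]; ring_nf
    _ ≤ exp (-b * p) := by gcongr

theorem tendsto_natCast_mul_integral_one_sub_pow_mul_exp {b : ℝ} (hb : 0 ≤ b) :
    Tendsto (fun k : ℕ => k * ∫ p in (0:ℝ)..1, (1 - p) ^ k * exp (-b * p)) atTop (𝓝 1) := by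
  obtain ⟨m, hbm⟩ := exists_nat_ge b
  have hpow_int (n : ℕ) : IntervalIntegrable (fun p : ℝ => (1 - p) ^ n) volume 0 1 :=
    (by fun_prop : Continuous fun p : ℝ => (1 - p) ^ n).intervalIntegrable 0 1
  have hexp_int (k : ℕ) :
      IntervalIntegrable (fun p : ℝ => (1 - p) ^ k * exp (-b * p)) volume 0 1 :=
    (by fun_prop : Continuous fun p : ℝ => (1 - p) ^ k * exp (-b * p)).intervalIntegrable 0 1
  have lower : ∀ k : ℕ, (k : ℝ) / (k + (m + 1)) ≤
      k * ∫ p in (0:ℝ)..1, (1 - p) ^ k * exp (-b * p) := by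
    intro k
    have : ∫ p in (0:ℝ)..1, (1 - p) ^ (k + m) ≤ ∫ p in (0:ℝ)..1, (1 - p) ^ k * exp (-b * p) := by
      refine intervalIntegral.integral_mono_on zero_le_one (hpow_int _) (hexp_int k) fun p hp => ?_
      rw [pow_add]
      exact mul_le_mul_of_nonneg_left (one_sub_pow_le_exp_neg_mul hp.1 hp.2 hbm)
        (pow_nonneg (by linarith [hp.2]) k)
    rw [integral_one_sub_pow] at this
    push_cast at this
    rw [div_eq_mul_one_div, ← add_assoc]
    exact mul_le_mul_of_nonneg_left this k.cast_nonneg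
  have upper : ∀ k : ℕ, k * ∫ p in (0:ℝ)..1, (1 - p) ^ k * exp (-b * p) ≤ 1 := by
    intro k
    have : ∫ p in (0:ℝ)..1, (1 - p) ^ k * exp (-b * p) ≤ ∫ p in (0:ℝ)..1, (1 - p) ^ k := by
      refine intervalIntegral.integral_mono_on zero_le_one (hexp_int k) (hpow_int k) fun p hp => ?_
      refine mul_le_of_le_one_right (pow_nonneg (by linarith [hp.2]) k) ?_
      exact exp_le_one_iff.mpr (by nlinarith [hp.1])
    rw [integral_one_sub_pow] at this
    calc _ ≤ (k : ℝ) * (1 / (k + 1)) := mul_le_mul_of_nonneg_left this k.cast_nonneg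
      _ ≤ 1 := by rw [mul_one_div, div_le_one (by positivity)]; linarith
  exact tendsto_of_tendsto_of_tendsto_of_le_of_le (tendsto_natCast_div_add_atTop _)
    tendsto_const_nhds lower upper

theorem tendsto_natCast_mul_neg_log_one_sub {x : ℕ → ℝ} {c : ℝ}
    (hx : Tendsto (fun k : ℕ => k * x k) atTop (𝓝 c)) :
    Tendsto (fun k : ℕ => k * -log (1 - x k)) atTop (𝓝 c) := by
  have hx0 : Tendsto x atTop (𝓝 0) := by
    have := hx.mul (tendsto_inv_atTop_zero.comp tendsto_natCast_atTop_atTop)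
    rw [mul_zero] at this
    refine this.congr' ?_
    filter_upwards [eventually_ne_atTop 0] with k hk
    show (k : ℝ) * x k * (k : ℝ)⁻¹ = x k
    field_simp [Nat.cast_ne_zero.mpr hk]
  have hupper : Tendsto (fun k : ℕ => k * x k / (1 - x k)) atTop (𝓝 c) := by
    have := hx.div (tendsto_const_nhds.sub hx0) (by norm_num : (1:ℝ) - 0 ≠ 0)
    rwa [sub_zero, div_one] at this
  refine tendsto_of_tendsto_of_tendsto_of_le_of_le' hx hupper ?_ ?_ <;>
    filter_upwards [hx0.eventually (gt_mem_nhds one_pos)] with k hk <;>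
    have hpos : 0 < 1 - x k := by linarith
  · exact mul_le_mul_of_nonneg_left (by linarith [log_le_sub_one_of_pos hpos]) k.cast_nonneg
  · rw [mul_div_assoc]
    refine mul_le_mul_of_nonneg_left ?_ k.cast_nonneg
    have hlog := one_sub_inv_le_log_of_pos hpos
    have : x k / (1 - x k) = (1 - x k)⁻¹ - 1 := by field_simp; ring
    linarith

/-- **Continuous Bernoulli distribution: power law with exponent 1.** If
per-attempt success probabilities follow `ContinuousBernoulli(λ)` with
`0 < λ < 1/2`, density `C(λ)·λ^x·(1-λ)^(1-x)` on `[0,1]` where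
`C(λ) = 2·artanh(1-2λ)/(1-2λ)`, then
`-log(pass_{ContinuousBernoulli(λ)}@k) = C(λ)·(1-λ)·k^(-1) + o(k^(-1))`. -/
theorem neg_log_pass_continuous_bernoulli_power_law
    (lam : ℝ) (hlam0 : 0 < lam) (hlam : lam < 1 / 2) :
    Tendsto
      (fun k : ℕ =>
        ((-Real.log (1 - ∫ p in (0:ℝ)..1, (1 - p) ^ k *
              ((2 * _root_.artanh (1 - 2 * lam) / (1 - 2 * lam)) *
                lam ^ p * (1 - lam) ^ (1 - p))))
            - (2 * _root_.artanh (1 - 2 * lam) / (1 - 2 * lam)) * (1 - lam) * (k : ℝ)⁻¹)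
          * (k : ℝ))
      atTop (nhds 0) := by
  set C := 2 * _root_.artanh (1 - 2 * lam) / (1 - 2 * lam)
  set b := log ((1 - lam) / lam)
  have hb : 0 ≤ b := log_nonneg ((one_le_div hlam0).mpr (by linarith))
  have hdensity : ∀ k : ℕ, ∫ p in (0:ℝ)..1, (1 - p) ^ k * (C * lam ^ p * (1 - lam) ^ (1 - p)) =
      C * (1 - lam) * ∫ p in (0:ℝ)..1, (1 - p) ^ k * exp (-b * p) := by
    intro k
    rw [← intervalIntegral.integral_const_mul]
    congr 1 with p
    rw [mul_assoc C, rpow_mul_rpow_one_sub hlam0 (by linarith)]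
    ring
  have hlim := tendsto_natCast_mul_neg_log_one_sub <| by
    simpa only [mul_left_comm] using
      (tendsto_natCast_mul_integral_one_sub_pow_mul_exp hb).const_mul (C * (1 - lam))
  rw [mul_one] at hlim
  have hlim' := hlim.sub_const (C * (1 - lam))
  rw [sub_self] at hlim'
  refine hlim'.congr' ?_
  filter_upwards [eventually_ne_atTop 0] with k hk
  rw [hdensity, sub_mul, inv_mul_cancel_right₀ (Nat.cast_ne_zero.mpr hk), mul_comm (k : ℝ)]
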